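/- arXiv:2602.05448 — 3 statements merged into one kernel-verified Lean document; each statement's English description precedes it below -/
import Mathlib

section
/- Let G be a directed graph on n vertices with condensation ~G on n' vertices. For any SCC C of G, the following are equivalent: (i) C has known-relationship count n'-1 in ~G; (ii) every vertex u in C has known-relationship count n-1 in G; (iii) some vertex u in C has known-relationship count n-1 in G. -/
variable {V : Type*}

def SameSCC (E : V → V → Prop) (u v : V) : Prop :=
  Relation.ReflTransGen E u v ∧ Relation.ReflTransGen E v u

def IsSCC (E : V → V → Prop) (C : Set V) : Prop :=
  C.Nonempty ∧ ∀ u ∈ C, ∀ v, (v ∈ C ↔ SameSCC E u v)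

def CondEdge (E : V → V → Prop) (C D : Set V) : Prop :=
  IsSCC E C ∧ IsSCC E D ∧ C ≠ D ∧ ∃ x ∈ C, ∃ y ∈ D, E x y

/-- Known-relationship count of a vertex `u`. -/
noncomputable def kappa (E : V → V → Prop) (u : V) : ℕ :=
  {w | w ≠ u ∧ (Relation.TransGen E w u ∨ Relation.TransGen E u w)}.ncard

/-- Known-relationship count of an SCC `C` in the condensation graph. -/
noncomputable def kappaCond (E : V → V → Prop) (C : Set V) : ℕ :=
  {D : Set V | IsSCC E D ∧ D ≠ C ∧
    (Relation.TransGen (CondEdge E) D C ∨ Relation.TransGen (CondEdge E) C D)}.ncard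

/-!
A vertex `u` is resolved exactly when every vertex `w` is comparable with it under
reachability. Reachability between vertices descends to reachability between their SCCs
in the condensation, and conversely a path `C ⟶ D` in the condensation lifts to a path from
any vertex of `C` to any vertex of `D`. Hence `u` is comparable with every vertex iff its
SCC is comparable with every SCC, a property that does not depend on the choice of `u ∈ C`.
-/

open Relation Set

section Counting

variable {α : Type*}

theorem Set.ncard_eq_ncard_sub_one_iff {S T : Set α} {a : α} (hS : S.Finite) (ha : a ∈ S)
    (hT : T ⊆ S \ {a}) : T.ncard = S.ncard - 1 ↔ S \ {a} ⊆ T := by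
  rw [← ncard_sdiff_singleton_of_mem ha]
  refine ⟨fun h => (eq_of_subset_of_ncard_le hT h.ge hS.sdiff).ge, fun h => ?_⟩
  rw [subset_antisymm hT h]

theorem Relation.transGen_or_transGen_iff_of_ne {R : α → α → Prop} {a b : α} (hab : b ≠ a) :
    (TransGen R b a ∨ TransGen R a b) ↔ (ReflTransGen R b a ∨ ReflTransGen R a b) := by
  simp only [reflTransGen_iff_eq_or_transGen, hab, hab.symm, false_or]

def ReachComparableOn (R : α → α → Prop) (S : Set α) (a : α) : Prop :=
  ∀ b ∈ S, ReflTransGen R b a ∨ ReflTransGen R a b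

theorem ncard_reachComparableOn_eq_iff {R : α → α → Prop} {S : Set α} {a : α} (hS : S.Finite)
    (ha : a ∈ S) :
    {b | b ∈ S ∧ b ≠ a ∧ (TransGen R b a ∨ TransGen R a b)}.ncard = S.ncard - 1 ↔
      ReachComparableOn R S a := by
  rw [Set.ncard_eq_ncard_sub_one_iff hS ha fun b hb => ⟨hb.1, hb.2.1⟩]
  refine ⟨fun h b hb => ?_, fun h b ⟨hbS, hba⟩ => ?_⟩
  · by_cases hba : b = a
    · exact hba ▸ .inl .refl
    · exact (transGen_or_transGen_iff_of_ne hba).1 (h ⟨hb, hba⟩).2.2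
  · exact ⟨hbS, hba, (transGen_or_transGen_iff_of_ne hba).2 (h b hbS)⟩

end Counting

section Condensation

variable {E : V → V → Prop}

def sccOf (E : V → V → Prop) (v : V) : Set V := {w | SameSCC E v w}

theorem SameSCC.refl (E : V → V → Prop) (v : V) : SameSCC E v v :=
  ⟨.refl, .refl⟩

theorem SameSCC.symm {u v : V} (h : SameSCC E u v) : SameSCC E v u :=
  ⟨h.2, h.1⟩

theorem SameSCC.trans {u v w : V} (h : SameSCC E u v) (h' : SameSCC E v w) : SameSCC E u w :=
  ⟨h.1.trans h'.1, h'.2.trans h.2⟩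

theorem mem_sccOf_self (E : V → V → Prop) (v : V) : v ∈ sccOf E v :=
  SameSCC.refl E v

theorem isSCC_sccOf (E : V → V → Prop) (v : V) : IsSCC E (sccOf E v) :=
  ⟨⟨v, mem_sccOf_self E v⟩, fun _ hu _ => ⟨hu.symm.trans, hu.trans⟩⟩

theorem IsSCC.eq_sccOf {C : Set V} {v : V} (hC : IsSCC E C) (hv : v ∈ C) : C = sccOf E v :=
  ext (hC.2 v hv)

theorem finite_setOf_isSCC [Finite V] (E : V → V → Prop) : {D : Set V | IsSCC E D}.Finite :=
  (finite_range (sccOf E)).subset fun _ hD =>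
    let ⟨v, hv⟩ := hD.1
    ⟨v, (hD.eq_sccOf hv).symm⟩

theorem reflTransGen_condEdge_sccOf {u w : V} (h : ReflTransGen E u w) :
    ReflTransGen (CondEdge E) (sccOf E u) (sccOf E w) := by
  induction h with
  | refl => exact .refl
  | @tail b c _ hbc ih =>
    by_cases hbc' : sccOf E b = sccOf E c
    · exact hbc' ▸ ih
    · exact ih.tail ⟨isSCC_sccOf E b, isSCC_sccOf E c, hbc',
        b, mem_sccOf_self E b, c, mem_sccOf_self E c, hbc⟩

theorem IsSCC.reflTransGen_of_condEdge {C D : Set V} {u w : V} (hC : IsSCC E C)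
    (h : ReflTransGen (CondEdge E) C D) (hu : u ∈ C) (hw : w ∈ D) : ReflTransGen E u w := by
  induction h generalizing w with
  | refl => exact ((hC.2 u hu w).1 hw).1
  | @tail D' D'' _ h ih =>
    obtain ⟨-, hD'', -, x, hx, y, hy, hxy⟩ := h
    exact ((ih hx).tail hxy).trans ((hD''.2 y hy w).1 hw).1

theorem IsSCC.reachComparableOn_univ_iff {C : Set V} {u : V} (hC : IsSCC E C) (hu : u ∈ C) :
    ReachComparableOn E univ u ↔ ReachComparableOn (CondEdge E) {D | IsSCC E D} C := by
  rw [hC.eq_sccOf hu]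
  refine ⟨fun h D hD => ?_, fun h w _ => ?_⟩
  · obtain ⟨w, hw⟩ := hD.1
    rw [hD.eq_sccOf hw]
    exact (h w (mem_univ w)).imp reflTransGen_condEdge_sccOf reflTransGen_condEdge_sccOf
  · exact (h (sccOf E w) (isSCC_sccOf E w)).imp
      (fun h' => (isSCC_sccOf E w).reflTransGen_of_condEdge h' (mem_sccOf_self E w)
        (mem_sccOf_self E u))
      (fun h' => (isSCC_sccOf E u).reflTransGen_of_condEdge h' (mem_sccOf_self E u)
        (mem_sccOf_self E w))

end Condensation

theorem kappa_eq_iff [Fintype V] (E : V → V → Prop) (u : V) :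
    kappa E u = Fintype.card V - 1 ↔ ReachComparableOn E univ u := by
  rw [← ncard_reachComparableOn_eq_iff finite_univ (mem_univ u), ncard_univ,
    Nat.card_eq_fintype_card, kappa]
  simp only [mem_univ, true_and]

theorem kappaCond_eq_iff [Finite V] (E : V → V → Prop) {C : Set V} (hC : IsSCC E C) :
    kappaCond E C = {D : Set V | IsSCC E D}.ncard - 1 ↔
      ReachComparableOn (CondEdge E) {D | IsSCC E D} C :=
  ncard_reachComparableOn_eq_iff (finite_setOf_isSCC E) hC

theorem stmt_8 [Fintype V] (E : V → V → Prop) (C : Set V) (hC : IsSCC E C) :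
    (kappaCond E C = {D : Set V | IsSCC E D}.ncard - 1 ↔
        ∀ u ∈ C, kappa E u = Fintype.card V - 1) ∧
    (kappaCond E C = {D : Set V | IsSCC E D}.ncard - 1 ↔
        ∃ u ∈ C, kappa E u = Fintype.card V - 1) := by
  have hkappa : ∀ u ∈ C,
      kappa E u = Fintype.card V - 1 ↔ ReachComparableOn (CondEdge E) {D | IsSCC E D} C :=
    fun u hu => (kappa_eq_iff E u).trans (hC.reachComparableOn_univ_iff hu)
  rw [kappaCond_eq_iff E hC]
  obtain ⟨v, hv⟩ := hC.1
  exact ⟨⟨fun h u hu => (hkappa u hu).2 h, fun h => (hkappa v hv).1 (h v hv)⟩,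
    ⟨fun h => ⟨v, hv, (hkappa v hv).2 h⟩, fun ⟨u, hu, h⟩ => (hkappa u hu).1 h⟩⟩
end

section
/- Let G* be a transitive tournament on n vertices and G' a subgraph of G* on the same vertex set. Suppose for some j ∈ [n-1] the sorted in-reach sizes of G' satisfy r^(1) < r^(2) < ... < r^(j) < r^(j+1). Then r^(i) = i - 1 for all i ≤ j, and the first j vertices in the in-reach ordering of G' coincide (in order) with the first j vertices of the in-degree ordering of G*. -/
variable {V : Type*}

def inreach (E : V → V → Prop) (v : V) : Set V :=
  {u | u ≠ v ∧ Relation.TransGen E u v}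

def IsTournament (E : V → V → Prop) : Prop :=
  (∀ v, ¬ E v v) ∧ ∀ u v : V, u ≠ v → (E u v ↔ ¬ E v u)

noncomputable def indeg (E : V → V → Prop) (v : V) : ℕ :=
  {w | E w v}.ncard

/-!
Let `p i` be the position of `v*⁽ⁱ⁾` in the in-reach ordering of `G'`. Paths of `G'` are paths of
the transitive `G*`, so `r(v*⁽ⁱ⁾) ≤ indeg(v*⁽ⁱ⁾) = i - 1`, whereas the strict chain
`r⁽¹⁾ < ⋯ < r⁽ʲ⁺¹⁾` forces `r⁽ⁱ⁾ ≥ i - 1` for `i ≤ j + 1`. Hence for `i ≤ j` the vertex `v*⁽ⁱ⁾`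
cannot sit after position `i`, and an injective `p` with `p i ≤ i` on an initial segment is the
identity there.
-/

theorem ncard_inreach_le_indeg [Finite V] {E E' : V → V → Prop}
    (htrans : ∀ u v w : V, E u v → E v w → E u w) (hsub : ∀ a b : V, E' a b → E a b) (v : V) :
    (inreach E' v).ncard ≤ indeg E v := by
  refine Set.ncard_le_ncard (fun u hu => ?_) (Set.toFinite _)
  have hE : Relation.TransGen E u v := Relation.TransGen.mono hsub _ _ hu.2
  rwa [@Relation.transGen_eq_self _ _ ⟨htrans⟩] at hE

namespace Fin

variable {n : ℕ}

theorem val_le_of_strictMono_upTo (f : Fin n → ℕ) (j : ℕ)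
    (hf : ∀ i i' : Fin n, i < i' → (i' : ℕ) ≤ j → f i < f i') :
    ∀ i : Fin n, (i : ℕ) ≤ j → (i : ℕ) ≤ f i := by
  intro ⟨i, hi⟩ hij
  induction i with
  | zero => exact Nat.zero_le _
  | succ k ih =>
    exact (ih (by omega) (Nat.le_of_succ_le hij)).trans_lt
      (hf ⟨k, by omega⟩ ⟨k + 1, hi⟩ (Fin.mk_lt_mk.mpr k.lt_succ_self) hij)

theorem eq_of_injective_of_le_upTo {σ : Fin n → Fin n} (hσ : Function.Injective σ) (j : ℕ)
    (hle : ∀ i : Fin n, (i : ℕ) < j → σ i ≤ i) : ∀ i : Fin n, (i : ℕ) < j → σ i = i := by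
  intro i
  induction i using WellFoundedLT.induction with
  | ind i ih =>
    intro hij
    refine (hle i hij).eq_or_lt.resolve_right fun hlt => hlt.ne ?_
    -- `σ i < i` is already a fixed point of `σ`, so injectivity gives `σ i = i`.
    exact hσ (ih (σ i) hlt (lt_of_le_of_lt (Fin.le_def.mp hlt.le) hij))

end Fin

theorem stmt_14_general [Fintype V] (E E' : V → V → Prop)
    (htrans : ∀ u v w : V, E u v → E v w → E u w)
    (hsub : ∀ a b : V, E' a b → E a b)
    (v' : Fin (Fintype.card V) → V) (hbij : Function.Bijective v')
    (hmono : Monotone fun i => (inreach E' (v' i)).ncard)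
    (vstar : Fin (Fintype.card V) → V) (hstarbij : Function.Bijective vstar)
    (hstar : ∀ i : Fin (Fintype.card V), indeg E (vstar i) = (i : ℕ))
    (j : ℕ)
    (hstrict : ∀ i i' : Fin (Fintype.card V), i < i' → (i' : ℕ) ≤ j →
      (inreach E' (v' i)).ncard < (inreach E' (v' i')).ncard) :
    ∀ i : Fin (Fintype.card V), (i : ℕ) < j →
      (inreach E' (v' i)).ncard = (i : ℕ) ∧ v' i = vstar i := by
  set r := fun i => (inreach E' (v' i)).ncard with hr
  have hlow := Fin.val_le_of_strictMono_upTo r j hstrict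
  choose p hp using fun i => hbij.2 (vstar i)
  have hup (i) : r (p i) ≤ i := by
    simpa only [hr, ← hstar i, ← hp] using ncard_inreach_le_indeg htrans hsub (vstar i)
  have hinj : Function.Injective p := fun a b hab => hstarbij.1 (by rw [← hp, ← hp, hab])
  have hpos := Fin.eq_of_injective_of_le_upTo hinj j fun i hij => by
    by_contra! hlt
    have hnext : (i : ℕ) + 1 ≤ r (p i) := (hlow ⟨i + 1, by omega⟩ hij).trans (hmono hlt)
    exact absurd (hup i) (by omega)
  intro i hij
  have hi := hpos i hij
  refine ⟨le_antisymm (by simpa only [hi] using hup i) (hlow i hij.le), ?_⟩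
  rw [← hp, hi]

theorem stmt_14 [Fintype V] (E E' : V → V → Prop) (hT : IsTournament E)
    (htrans : ∀ u v w : V, E u v → E v w → E u w)
    (hsub : ∀ a b : V, E' a b → E a b)
    (v' : Fin (Fintype.card V) → V) (hbij : Function.Bijective v')
    (hmono : Monotone fun i => (inreach E' (v' i)).ncard)
    (vstar : Fin (Fintype.card V) → V) (hstarbij : Function.Bijective vstar)
    (hstar : ∀ i : Fin (Fintype.card V), indeg E (vstar i) = (i : ℕ))
    (j : ℕ) (hj1 : 1 ≤ j) (hjn : j ≤ Fintype.card V - 1)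
    (hstrict : ∀ i i' : Fin (Fintype.card V), i < i' → (i' : ℕ) ≤ j →
      (inreach E' (v' i)).ncard < (inreach E' (v' i')).ncard) :
    ∀ i : Fin (Fintype.card V), (i : ℕ) < j →
      (inreach E' (v' i)).ncard = (i : ℕ) ∧ v' i = vstar i :=
  stmt_14_general E E' htrans hsub v' hbij hmono vstar hstarbij hstar j hstrict
end

section
/- Let G* be a tournament and G a subgraph of G* on the same vertex set, and let u, v be distinct vertices. If u is resolved in G (its known-relationship count is n-1) and v is not in the in-reach of u in G, then the in-reach size of u in G* is at most the in-reach size of v in G*. -/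
variable {V : Type*}

/-! A path from `u` to `v` puts every vertex that reaches `u` into the in-reach of `v`, except `v`
itself, which is traded for `u`; so the in-reach can only grow along paths. A resolved vertex `u`
is joined to `v` by a path one way or the other, and `v ∉ inreach E u` forces the direction
`u → v`, which persists in the supergraph `Estar`. -/

open Relation

theorem transGen_or_transGen_of_kappa_eq [Fintype V] {E : V → V → Prop} {u w : V}
    (hres : kappa E u = Fintype.card V - 1) (hw : w ≠ u) :
    TransGen E w u ∨ TransGen E u w := by
  set S := {w | w ≠ u ∧ (TransGen E w u ∨ TransGen E u w)}
  have hS : S = {u}ᶜ := by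
    refine Set.eq_of_subset_of_ncard_le (fun x hx => hx.1) ?_
    rw [Set.ncard_compl, Set.ncard_singleton, Nat.card_eq_fintype_card, ← hres]
    rfl
  have hwS : w ∈ S := hS ▸ hw
  exact hwS.2

theorem inreach_subset_insert_inreach_diff {R : V → V → Prop} {u v : V}
    (huv : TransGen R u v) : inreach R u ⊆ insert v (inreach R v \ {u}) := by
  rintro w ⟨hwu, hw⟩
  by_cases hwv : w = v
  · exact Or.inl hwv
  · exact Or.inr ⟨⟨hwv, hw.trans huv⟩, hwu⟩

theorem ncard_inreach_le_of_transGen [Finite V] {R : V → V → Prop} {u v : V} (hne : u ≠ v)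
    (huv : TransGen R u v) : (inreach R u).ncard ≤ (inreach R v).ncard :=
  calc (inreach R u).ncard
      ≤ (insert v (inreach R v \ {u})).ncard :=
        Set.ncard_le_ncard (inreach_subset_insert_inreach_diff huv)
    _ ≤ (inreach R v \ {u}).ncard + 1 := Set.ncard_insert_le _ _
    _ = (inreach R v).ncard := Set.ncard_sdiff_singleton_add_one ⟨hne, huv⟩

theorem stmt_18_general [Fintype V] (Estar E : V → V → Prop)
    (hsub : ∀ a b : V, E a b → Estar a b)
    (u v : V) (hne : u ≠ v)
    (hres : kappa E u = Fintype.card V - 1)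
    (hnin : v ∉ inreach E u) :
    (inreach Estar u).ncard ≤ (inreach Estar v).ncard := by
  have huv : TransGen E u v :=
    (transGen_or_transGen_of_kappa_eq hres hne.symm).resolve_left fun h => hnin ⟨hne.symm, h⟩
  exact ncard_inreach_le_of_transGen hne (TransGen.mono hsub u v huv)

theorem stmt_18 [Fintype V] (Estar E : V → V → Prop) (hT : IsTournament Estar)
    (hsub : ∀ a b : V, E a b → Estar a b)
    (u v : V) (hne : u ≠ v)
    (hres : kappa E u = Fintype.card V - 1)
    (hnin : v ∉ inreach E u) :
    (inreach Estar u).ncard ≤ (inreach Estar v).ncard :=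
  stmt_18_general Estar E hsub u v hne hres hnin
end
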